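/- arXiv:2603.12917 — 8 statements merged into one kernel-verified Lean document; each statement's English description precedes it below -/
import Mathlib

section
/- For every n ≥ 4, every permutation of (Fin n → Bool) that acts on at most 3 coordinates has sign +1, i.e., is an even permutation. In particular, every gate from the set {CCX, CX, X} acting on n ≥ 4 qubits induces an even permutation of {0,1}^n. -/
/-- A permutation `g` of bit strings `Fin n → Bool` *acts on at most 3 coordinates
(qubits)* if there is a set `S` of at most 3 coordinates such that `g` leaves all
coordinates outside `S` unchanged, and the restriction of `g x` to `S` depends only on
the restriction of `x` to `S`. -/
def ActsOnAtMost3 {n : ℕ} (g : Equiv.Perm (Fin n → Bool)) : Prop :=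
  ∃ S : Finset (Fin n), S.card ≤ 3 ∧
    (∀ (x : Fin n → Bool) (i : Fin n), i ∉ S → g x i = x i) ∧
    (∀ x y : Fin n → Bool, (∀ i ∈ S, x i = y i) → ∀ i ∈ S, g x i = g y i)

/-- **Gates on at most 3 of `n ≥ 4` qubits are even permutations.**
For every `n ≥ 4`, every permutation of `Fin n → Bool` that acts on at most 3
coordinates has sign `+1`.  In particular, every gate from the set `{CCX, CX, X}`
acting on `n ≥ 4` qubits induces an even permutation of `{0,1}^n`. -/
theorem sign_eq_one_of_actsOnAtMost3 (n : ℕ) (hn : 4 ≤ n)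
    (g : Equiv.Perm (Fin n → Bool)) (hg : ActsOnAtMost3 g) :
    Equiv.Perm.sign g = 1 := by
  classical
  obtain ⟨S, hcard, hout, hdep⟩ := hg
  set e : (Fin n → Bool) ≃ ((∀ i : {x : Fin n // x ∈ S}, Bool) ×
      (∀ i : {x : Fin n // ¬ x ∈ S}, Bool)) :=
    Equiv.piEquivPiSubtypeProd (fun i : Fin n => i ∈ S) (fun _ => Bool) with he
  set h := (e.symm.trans g).trans e with hh
  -- second component is fixed by h
  have h2 : ∀ z, (h z).2 = z.2 := by
    intro z
    funext i
    have : g (e.symm z) i.1 = (e.symm z) i.1 := hout _ _ i.2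
    simpa [hh, he, Equiv.piEquivPiSubtypeProd, i.2] using this
  -- first component depends only on the first component
  have h1 : ∀ a b b', (h (a, b)).1 = (h (a, b')).1 := by
    intro a b b'
    funext i
    have hxy : ∀ j ∈ S, (e.symm (a, b)) j = (e.symm (a, b')) j := by
      intro j hj
      simp [he, Equiv.piEquivPiSubtypeProd, hj]
    have := hdep _ _ hxy i.1 i.2
    simpa [hh, he, Equiv.piEquivPiSubtypeProd] using this
  have h2s : ∀ z, (h.symm z).2 = z.2 := by
    intro z
    have := h2 (h.symm z)
    simpa using this.symm
  set b₀ : ∀ i : {x : Fin n // ¬ x ∈ S}, Bool := fun _ => false with hb₀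
  have hpair : ∀ a b, h (a, b) = ((h (a, b)).1, b) := by
    intro a b
    have := h2 (a, b)
    exact Prod.ext rfl this
  have hpairs : ∀ a b, h.symm (a, b) = ((h.symm (a, b)).1, b) := by
    intro a b
    have := h2s (a, b)
    exact Prod.ext rfl this
  set σ : Equiv.Perm (∀ i : {x : Fin n // x ∈ S}, Bool) :=
    { toFun := fun a => (h (a, b₀)).1
      invFun := fun a => (h.symm (a, b₀)).1
      left_inv := by
        intro a
        show (h.symm ((h (a, b₀)).1, b₀)).1 = a
        rw [← hpair, Equiv.symm_apply_apply]
      right_inv := by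
        intro a
        show (h ((h.symm (a, b₀)).1, b₀)).1 = a
        rw [← hpairs, Equiv.apply_symm_apply] } with hσ
  have hform : h = Equiv.prodCongrLeft
      (fun _ : (∀ i : {x : Fin n // ¬ x ∈ S}, Bool) => σ) := by
    apply Equiv.ext
    rintro ⟨a, b⟩
    have : h (a, b) = ((h (a, b₀)).1, b) := by
      rw [hpair a b, h1 a b b₀]
    rw [this]
    rfl
  have hsg : Equiv.Perm.sign g = Equiv.Perm.sign h := by
    rw [hh, Equiv.Perm.sign_symm_trans_trans]
  rw [hsg, hform, Equiv.Perm.sign_prodCongrLeft]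
  rw [Finset.prod_const]
  have hcard2 : Fintype.card (∀ i : {x : Fin n // ¬ x ∈ S}, Bool) =
      2 ^ Fintype.card {x : Fin n // ¬ x ∈ S} := by
    simp [Fintype.card_pi]
  have hcardsub : Fintype.card {x : Fin n // ¬ x ∈ S} = n - S.card := by
    simpa using Fintype.card_subtype_compl (fun x : Fin n => x ∈ S)
  have hpos : 1 ≤ n - S.card := by omega
  obtain ⟨k, hk⟩ : ∃ k, n - S.card = k + 1 := ⟨n - S.card - 1, by omega⟩
  rw [Finset.card_univ, hcard2, hcardsub, hk, pow_succ, pow_mul]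
  have : (Equiv.Perm.sign σ) ^ 2 = 1 := by
    rcases Int.units_eq_one_or (Equiv.Perm.sign σ) with h | h <;> rw [h] <;> decide
  rw [← pow_mul, mul_comm, pow_mul, this, one_pow]
end

section
/- For every k ≥ 3, the C^kX permutation of (Fin (k+1) → Bool) cannot be written as a composition of finitely many permutations each of which acts on at most 3 coordinates; i.e., C^kX on k+1 qubits is not implementable over the {CCX, CX, X} gate set without at least one ancilla qubit. -/
/-- The action of the `C^kX` gate on bit strings of length `k+1`: the first `k`
coordinates (the controls) are unchanged, and the last coordinate (the target) is
XORed with the AND of all controls. -/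
def ckxFun (k : ℕ) (x : Fin (k + 1) → Bool) : Fin (k + 1) → Bool :=
  fun i => if i = Fin.last k then
    xor (x i) (decide (∀ j : Fin k, x j.castSucc = true)) else x i

theorem ckxFun_involutive (k : ℕ) : Function.Involutive (ckxFun k) := by
  intro x
  funext i
  have hne : ∀ j : Fin k, (j.castSucc : Fin (k + 1)) ≠ Fin.last k :=
    fun j => (Fin.castSucc_lt_last j).ne
  by_cases hi : i = Fin.last k
  · subst hi
    simp only [ckxFun, if_pos rfl]
    cases x (Fin.last k) <;> simp [hne]
  · simp [ckxFun, hi]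

/-- The `C^kX` permutation of `Fin (k+1) → Bool`. -/
def ckx (k : ℕ) : Equiv.Perm (Fin (k + 1) → Bool) := (ckxFun_involutive k).toPerm _

/-! A gate acting on a set `S` of coordinates that misses some coordinate is, after splitting
`ι → β` as `(S → β) × (Sᶜ → β)`, a permutation `σ` of `S → β` applied once for each of the
`|β| ^ |Sᶜ|` values of the untouched coordinates; its sign is therefore `sign σ ^ |β| ^ |Sᶜ|`,
which is `1` when `|β|` is even. So every 3-qubit gate on at least 4 qubits is an even
permutation, whereas `C^kX` swaps exactly two bit strings and is odd. -/

open Equiv Equiv.Perm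

section LocalPerm

variable {ι β : Type*}

def IsLocalOn (S : Finset ι) (g : Perm (ι → β)) : Prop :=
  (∀ x, ∀ i ∉ S, g x i = x i) ∧ ∀ x y, (∀ i ∈ S, x i = y i) → ∀ i ∈ S, g x i = g y i

variable [DecidableEq ι] {S : Finset ι} {g : Perm (ι → β)}

theorem IsLocalOn.exists_permCongr_eq_prodCongrLeft [Nonempty β] (hg : IsLocalOn S g) :
    ∃ σ : Perm ({i // i ∈ S} → β),
      (piEquivPiSubtypeProd (· ∈ S) fun _ => β).permCongr g = prodCongrLeft fun _ => σ := by
  set e := piEquivPiSubtypeProd (· ∈ S) fun _ => β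
  obtain ⟨hout, hin⟩ := hg
  obtain ⟨b₀⟩ : Nonempty ({i // i ∉ S} → β) := inferInstance
  set f := fun a => (e.permCongr g (a, b₀)).1
  have hsplit : ∀ a b, e.permCongr g (a, b) = (f a, b) := by
    intro a b
    ext i
    · exact hin (e.symm (a, b)) (e.symm (a, b₀)) (fun j hj => by simp [e, hj]) i i.2
    · simpa [e, i.2] using hout (e.symm (a, b)) i i.2
  have hf : Function.Bijective f := by
    refine ⟨fun a a' h => ?_, fun c => ?_⟩
    · simpa using (e.permCongr g).injective (by rw [hsplit, hsplit, h] :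
      e.permCongr g (a, b₀) = e.permCongr g (a', b₀))
    · obtain ⟨⟨a, b⟩, hab⟩ := (e.permCongr g).surjective (c, b₀)
      rw [hsplit, Prod.mk.injEq] at hab
      exact ⟨a, hab.1⟩
  exact ⟨ofBijective f hf, Equiv.ext fun ⟨a, b⟩ => hsplit a b⟩

theorem IsLocalOn.sign_eq_one [Fintype ι] [Fintype β] [DecidableEq β] [Nonempty β]
    (hβ : Even (Fintype.card β)) (hS : ∃ i, i ∉ S) (hg : IsLocalOn S g) : sign g = 1 := by
  obtain ⟨σ, hσ⟩ := hg.exists_permCongr_eq_prodCongrLeft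
  have hev : Even (Fintype.card ({i // i ∉ S} → β)) := by
    obtain ⟨i, hi⟩ := hS
    rw [Fintype.card_fun]
    exact hβ.pow_of_ne_zero (Fintype.card_pos_iff.mpr ⟨(⟨i, hi⟩ : {i // i ∉ S})⟩).ne'
  obtain ⟨m, hm⟩ := hev
  rw [← sign_permCongr (piEquivPiSubtypeProd (· ∈ S) fun _ => β), hσ, sign_prodCongrLeft,
    Finset.prod_const, Finset.card_univ, hm, ← two_mul, pow_mul, Int.units_sq, one_pow]

end LocalPerm

theorem ActsOnAtMost3.sign_eq_one {n : ℕ} (hn : 4 ≤ n) {g : Perm (Fin n → Bool)}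
    (hg : ActsOnAtMost3 g) : sign g = 1 := by
  obtain ⟨S, hcard, hlocal⟩ := hg
  obtain ⟨i, -, hi⟩ := Finset.exists_mem_notMem_of_card_lt_card
    (s := S) (t := Finset.univ) (by simp; omega)
  exact IsLocalOn.sign_eq_one (by simp) ⟨i, hi⟩ hlocal

section Ckx

variable {k : ℕ}

theorem ckx_snoc (c : Fin k → Bool) (b : Bool) :
    ckx k (Fin.snoc c b) = Fin.snoc c (xor b (decide (∀ j, c j = true))) := by
  funext i
  induction i using Fin.lastCases with
  | last => simp [ckx, ckxFun]
  | cast j => simp [ckx, ckxFun, (Fin.castSucc_lt_last j).ne]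

theorem ckx_eq_swap :
    ckx k = swap (Fin.snoc (fun _ => true) true) (Fin.snoc (fun _ => true) false) := by
  ext1 x
  rw [← Fin.snoc_init_self x]
  by_cases hc : Fin.init x = fun _ => true
  · rw [hc]
    cases x (Fin.last k) <;> simp [ckx_snoc]
  · have hne : ∀ b, (Fin.snoc (Fin.init x) (x (Fin.last k)) : Fin (k + 1) → Bool) ≠
        Fin.snoc (fun _ => true) b := fun b h => hc (Fin.snoc_injective2 h).1
    have hnot_all : ¬ ∀ j, Fin.init x j = true := fun h => hc (funext h)
    rw [swap_apply_of_ne_of_ne (hne _) (hne _), ckx_snoc]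
    simp [hnot_all]

theorem sign_ckx : sign (ckx k) = -1 :=
  ckx_eq_swap ▸ sign_swap fun h => by simpa using (Fin.snoc_injective2 h).2

end Ckx

/-- **`C^kX` needs an ancilla over `{CCX, CX, X}`.**
For every `k ≥ 3`, the `C^kX` permutation of `Fin (k+1) → Bool` cannot be written as a
composition of finitely many permutations each of which acts on at most 3 coordinates;
i.e. `C^kX` on `k+1` qubits is not implementable over the `{CCX, CX, X}` gate set
without at least one ancilla qubit. -/
theorem ckx_not_composition_of_3local (k : ℕ) (hk : 3 ≤ k) :
    ¬ ∃ L : List (Equiv.Perm (Fin (k + 1) → Bool)),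
        (∀ g ∈ L, ActsOnAtMost3 g) ∧ L.prod = ckx k := by
  rintro ⟨L, hL, hprod⟩
  have hsign : sign L.prod = 1 := by
    rw [map_list_prod]
    refine List.prod_eq_one fun u hu => ?_
    obtain ⟨g, hg, rfl⟩ := List.mem_map.mp hu
    exact (hL g hg).sign_eq_one (by omega)
  rw [hprod, sign_ckx] at hsign
  exact absurd hsign (by decide)
end

section
/- For every n ≥ 1, the increment permutation a ↦ a + 1 of ZMod (2^n) has sign −1 (it is a cycle of even length 2^n, hence an odd permutation). Consequently, for every n ≥ 4, the n-bit increment permutation of (Fin n → Bool), obtained by transporting a ↦ a + 1 on Fin (2^n) along the little-endian binary encoding equivalence, cannot be written as a composition of finitely many permutations each acting on at most 3 coordinates; i.e., the n-bit incrementer requires at least one ancilla qubit over the {CCX, CX, X} gate set. -/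
open Equiv Equiv.Perm

theorem ZMod.sign_addRight_one (m : ℕ) [NeZero m] :
    sign (Equiv.addRight (1 : ZMod m)) = sign (finRotate m) := by
  rw [← sign_permCongr (ZMod.finEquiv m).toEquiv]
  congr 1
  ext x
  simp [Equiv.permCongr_apply, finRotate_apply]

theorem sign_finRotate_two_pow {n : ℕ} (hn : n ≠ 0) : sign (finRotate (2 ^ n)) = -1 := by
  rw [sign_finRotate, Odd.neg_one_pow]
  exact Nat.Even.sub_odd Nat.one_le_two_pow (Nat.even_pow.mpr ⟨even_two, hn⟩) odd_one

theorem exists_sign_prod_eq_sign_pow_card {A B : Type*} [Fintype A] [DecidableEq A] [Fintype B]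
    [DecidableEq B] [Nonempty B] (p : Perm (A × B)) (hsnd : ∀ x, (p x).2 = x.2)
    (hfst : ∀ a b b', (p (a, b)).1 = (p (a, b')).1) :
    ∃ h : Perm A, sign p = sign h ^ Fintype.card B := by
  obtain ⟨b₀⟩ := ‹Nonempty B›
  set f : A → A := fun a => (p (a, b₀)).1
  have hp : ∀ a b, p (a, b) = (f a, b) := fun a b => Prod.ext (hfst a b b₀) (hsnd (a, b))
  have hf : f.Injective := fun a a' h => by
    simpa using p.injective ((hp a b₀).trans ((congrArg (·, b₀) h).trans (hp a' b₀).symm))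
  let h := Equiv.ofBijective f (Finite.injective_iff_bijective.mp hf)
  have hp_eq : p = prodCongrLeft fun _ => h := Equiv.ext fun ⟨a, b⟩ => hp a b
  refine ⟨h, ?_⟩
  rw [hp_eq, sign_prodCongrLeft, Finset.prod_const, Finset.card_univ]

theorem exists_sign_eq_sign_pow_of_supported {ι β : Type*} [Fintype ι] [DecidableEq ι]
    [Fintype β] [DecidableEq β] [Nonempty β] (g : Perm (ι → β)) (S : Finset ι)
    (hout : ∀ x i, i ∉ S → g x i = x i)
    (hin : ∀ x y, (∀ i ∈ S, x i = y i) → ∀ i ∈ S, g x i = g y i) :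
    ∃ h : Perm (S → β), sign g = sign h ^ (Fintype.card β ^ (Fintype.card ι - S.card)) := by
  let π := piEquivPiSubtypeProd (· ∈ S) (fun _ => β)
  obtain ⟨h, hh⟩ := exists_sign_prod_eq_sign_pow_card (π.permCongr g)
    (fun x => funext fun i => by simp [π, Equiv.permCongr_apply, hout _ _ i.2, i.2])
    (fun a b b' => funext fun i => hin _ _ (fun j hj => by simp [π, hj]) i i.2)
  refine ⟨h, ?_⟩
  rw [← sign_permCongr π, hh, Fintype.card_fun, Fintype.card_subtype_compl, Fintype.card_coe]

/-- **The incrementer is an odd permutation and needs an ancilla.**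
For every `n ≥ 1`, the increment permutation `a ↦ a + 1` of `ZMod (2^n)` has sign `-1`.
Consequently, for every `n ≥ 4`, the `n`-bit increment permutation of `Fin n → Bool`,
obtained by transporting `a ↦ a + 1` on `Fin (2^n)` along the little-endian binary
encoding equivalence, cannot be written as a composition of finitely many permutations
each acting on at most 3 coordinates; i.e. the `n`-bit incrementer requires at least one
ancilla qubit over the `{CCX, CX, X}` gate set. -/
theorem incrementer_odd_and_needs_ancilla :
    (∀ n : ℕ, 1 ≤ n → Equiv.Perm.sign (Equiv.addRight (1 : ZMod (2 ^ n))) = -1) ∧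
    (∀ n : ℕ, 4 ≤ n →
      ∀ e : (Fin n → Bool) ≃ Fin (2 ^ n),
        (∀ x : Fin n → Bool,
            ((e x : Fin (2 ^ n)) : ℕ) = ∑ i : Fin n, 2 ^ (i : ℕ) * (if x i then 1 else 0)) →
        ∀ σ : Equiv.Perm (Fin n → Bool),
          (∀ x : Fin n → Bool, ((e (σ x) : Fin (2 ^ n)) : ℕ) = (((e x : Fin (2 ^ n)) : ℕ) + 1) % 2 ^ n) →
          ¬ ∃ L : List (Equiv.Perm (Fin n → Bool)),
              (∀ g ∈ L, ActsOnAtMost3 g) ∧ L.prod = σ) := by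
  refine ⟨fun n hn => ?_, fun n hn e _ σ hσ ⟨L, hL, hLσ⟩ => ?_⟩
  · rw [ZMod.sign_addRight_one, sign_finRotate_two_pow (by omega)]
  · have hσ_rot : σ = e.symm.permCongr (finRotate (2 ^ n)) := Equiv.ext fun x => by
      rw [permCongr_apply, symm_symm, eq_symm_apply]
      ext
      rw [hσ, finRotate_apply, Fin.val_add, Fin.val_one', Nat.add_mod_mod]
    have hσ_even : σ ∈ alternatingGroup _ := hLσ ▸ Subgroup.list_prod_mem _ fun g hg =>
      mem_alternatingGroup.mpr ((hL g hg).sign_eq_one hn)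
    rw [mem_alternatingGroup, hσ_rot, sign_permCongr, sign_finRotate_two_pow (by omega)]
      at hσ_even
    exact absurd hσ_even (by decide)
end

section
/- C^kX from two incrementers (Eq. (2)): for all k ≥ 1, all x < 2^k and all t ∈ {0,1}, set s = (2^k * t + x + 1) % 2^(k+1) (the (k+1)-bit incrementer applied to the register with low part x and high bit t). Then ((s % 2^k) + (2^k − 1)) % 2^k = x (the k-bit decrementer restores the control register), and s / 2^k = if x = 2^k − 1 then 1 − t else t (the target bit is flipped exactly when all control bits are 1). Hence a (k+1)-bit incrementer followed by a k-bit decrementer on the control register implements the C^kX gate. -/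
/-- **`C^kX` from two incrementers (Eq. (2)).**
For `k ≥ 1`, `x < 2^k` and `t ∈ {0,1}`, let `s = (2^k * t + x + 1) % 2^(k+1)` be the
result of the `(k+1)`-bit incrementer applied to the register with low part `x` and
high bit `t`.  Then the `k`-bit decrementer restores the control register, and the
target bit `s / 2^k` is flipped exactly when all control bits are `1`. -/
theorem ckx_from_incrementers (k : ℕ) (hk : 1 ≤ k) (x t : ℕ) (hx : x < 2 ^ k) (ht : t ≤ 1) :
    (((2 ^ k * t + x + 1) % 2 ^ (k + 1)) % 2 ^ k + (2 ^ k - 1)) % 2 ^ k = x ∧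
    ((2 ^ k * t + x + 1) % 2 ^ (k + 1)) / 2 ^ k = if x = 2 ^ k - 1 then 1 - t else t := by
  have hP : 2 ≤ 2 ^ k := by
    calc 2 = 2 ^ 1 := rfl
    _ ≤ 2 ^ k := Nat.pow_le_pow_right (by norm_num) hk
  have h2 : 2 ^ (k + 1) = 2 * 2 ^ k := by ring
  rw [h2]
  interval_cases t <;> by_cases hx' : x = 2 ^ k - 1 <;>
    simp only [hx', if_pos, if_neg, not_false_iff, mul_one, mul_zero, zero_add]
  · have e0 : 2 ^ k - 1 + 1 = 2 ^ k := by omega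
    rw [e0]
    have a1 : 2 ^ k % (2 * 2 ^ k) = 2 ^ k := Nat.mod_eq_of_lt (by omega)
    have a2 : 2 ^ k % 2 ^ k = 0 := Nat.mod_self _
    have a3 : (0 + (2 ^ k - 1)) % 2 ^ k = 2 ^ k - 1 := by
      rw [Nat.zero_add]; exact Nat.mod_eq_of_lt (by omega)
    have a4 : 2 ^ k / 2 ^ k = 1 := Nat.div_self (by omega)
    rw [a1, a2, a3, a4]
    exact ⟨rfl, rfl⟩
  · have a1 : (x + 1) % (2 * 2 ^ k) = x + 1 := Nat.mod_eq_of_lt (by omega)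
    have a2 : (x + 1) % 2 ^ k = x + 1 := Nat.mod_eq_of_lt (by omega)
    have a3 : (x + 1 + (2 ^ k - 1)) % 2 ^ k = x := by
      have : x + 1 + (2 ^ k - 1) = x + 2 ^ k := by omega
      rw [this, Nat.add_mod_right]; exact Nat.mod_eq_of_lt hx
    have a4 : (x + 1) / 2 ^ k = 0 := Nat.div_eq_of_lt (by omega)
    rw [a1, a2, a3, a4]
    exact ⟨rfl, rfl⟩
  · have e0 : 2 ^ k + (2 ^ k - 1) + 1 = 2 * 2 ^ k := by omega
    rw [e0]
    have a1 : 2 * 2 ^ k % (2 * 2 ^ k) = 0 := Nat.mod_self _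
    have a2 : (0 : ℕ) % 2 ^ k = 0 := Nat.zero_mod _
    have a3 : (0 + (2 ^ k - 1)) % 2 ^ k = 2 ^ k - 1 := by
      rw [Nat.zero_add]; exact Nat.mod_eq_of_lt (by omega)
    have a4 : (0 : ℕ) / 2 ^ k = 0 := Nat.zero_div _
    rw [a1, a2, a3, a4]
    exact ⟨rfl, rfl⟩
  · have a1 : (2 ^ k + x + 1) % (2 * 2 ^ k) = 2 ^ k + x + 1 := Nat.mod_eq_of_lt (by omega)
    have a2 : (2 ^ k + x + 1) % 2 ^ k = x + 1 := by
      have : 2 ^ k + x + 1 = x + 1 + 2 ^ k := by omega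
      rw [this, Nat.add_mod_right]; exact Nat.mod_eq_of_lt (by omega)
    have a3 : (x + 1 + (2 ^ k - 1)) % 2 ^ k = x := by
      have : x + 1 + (2 ^ k - 1) = x + 2 ^ k := by omega
      rw [this, Nat.add_mod_right]; exact Nat.mod_eq_of_lt hx
    have a4 : (2 ^ k + x + 1) / 2 ^ k = 1 := by
      have : 2 ^ k + x + 1 = 2 ^ k * 1 + (x + 1) := by ring
      rw [this, Nat.mul_add_div (by omega), Nat.div_eq_of_lt (by omega)]
    rw [a1, a2, a3, a4]
    exact ⟨rfl, rfl⟩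
end

section
/- Gidney's toggle-detection identity for the incrementer (Eq. (15)): fix n and k, work in ZMod (2^n), and write compl y = −y − 1 for the bitwise complement. For every c : Fin k → Bool, ψ : Bool and x : ZMod (2^n), set b = decide (∀ i, c i = true) and define x₁ = x + (if ψ then 1 else 0); (x₂, ψ₂) = (if b then (compl x₁, ¬ψ) else (x₁, ψ)); x₃ = x₂ − (if ψ₂ then 1 else 0); (x₄, ψ₄) = (if b then (compl x₃, ¬ψ₂) else (x₃, ψ₂)). Then ψ₄ = ψ and x₄ = x + (if b then 1 else 0). -/
/-- **Gidney's toggle-detection identity for the incrementer (Eq. (15)).**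
In `ZMod (2^n)` with `compl y = -y - 1` the bitwise complement: an uncontrolled
`ψ`-controlled increment, a `C^kX`-controlled complement-and-ancilla-toggle, a
`ψ`-controlled decrement, and a second complement-and-toggle together implement the
increment of `x` controlled on all bits of `c`, restoring the dirty ancilla `ψ`. -/
theorem gidney_toggle_detection_incrementer (n k : ℕ) (c : Fin k → Bool) (ψ : Bool)
    (x : ZMod (2 ^ n)) :
    let compl : ZMod (2 ^ n) → ZMod (2 ^ n) := fun y => -y - 1
    let b := decide (∀ i, c i = true)
    let x₁ := x + (if ψ then 1 else 0)
    let x₂ := if b then compl x₁ else x₁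
    let ψ₂ := if b then !ψ else ψ
    let x₃ := x₂ - (if ψ₂ then 1 else 0)
    let x₄ := if b then compl x₃ else x₃
    let ψ₄ := if b then !ψ₂ else ψ₂
    ψ₄ = ψ ∧ x₄ = x + (if b then 1 else 0) := by
  intro compl b x₁ x₂ ψ₂ x₃ x₄ ψ₄
  simp only [compl, b, x₁, x₂, ψ₂, x₃, x₄, ψ₄]
  by_cases h : ∀ i, c i = true <;> cases ψ <;> simp [h] <;> ring
end

section
/- Comparison via the high bit of a two's-complement difference (basis of the quantum–quantum comparator): for every n and all a, b : ℕ with a < 2^n and b < 2^n, one has a < b if and only if 2^n ≤ (2^(n+1) + a − b) % 2^(n+1). That is, the high bit of the (n+1)-bit two's-complement difference a − b equals 1 exactly when a < b. -/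
/-- **Comparison via the high bit of a two's-complement difference.**
For `a, b < 2^n`, one has `a < b` iff the high bit of the `(n+1)`-bit two's-complement
difference `a - b` is `1`, i.e. iff `2^n ≤ (2^(n+1) + a - b) % 2^(n+1)`. -/
theorem comparison_via_high_bit (n a b : ℕ) (ha : a < 2 ^ n) (hb : b < 2 ^ n) :
    a < b ↔ 2 ^ n ≤ (2 ^ (n + 1) + a - b) % 2 ^ (n + 1) := by
  have h2 : 2 ^ (n + 1) = 2 * 2 ^ n := by ring
  rcases lt_or_ge a b with h | h
  · have hlt : 2 ^ (n + 1) + a - b < 2 ^ (n + 1) := by omega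
    rw [Nat.mod_eq_of_lt hlt]; omega
  · have : 2 ^ (n + 1) + a - b = 2 ^ (n + 1) + (a - b) := by omega
    rw [this, Nat.add_mod_left, Nat.mod_eq_of_lt (by omega)]
    omega
end

section
/- Parity of the classical–quantum comparator: for every n ≥ 1 and every c : ℕ with c < 2^n, the permutation of Fin (2^n) × Bool defined by (a, z) ↦ (a, xor z (decide (c < a))) has sign (−1)^(2^n − 1 − c). In particular, for c = 2^n − 2 (and more generally whenever 2^n − 1 − c is odd) the classical–quantum comparator induces an odd permutation. -/
/-!
The comparator fixes the register `a` and, on each fibre `{a} × Bool` with `c < a`, swaps the two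
values of the target bit. It is therefore a product of one transposition for each of the
`2^n - 1 - c` values `a > c`.
-/

/-- The action of the `n`-bit classical–quantum comparator with classical constant `c`:
it maps `(a, z)` to `(a, xor z (decide (c < a)))`. -/
def cqCmpFun (n c : ℕ) : Fin (2 ^ n) × Bool → Fin (2 ^ n) × Bool :=
  fun p => (p.1, xor p.2 (decide (c < (p.1 : ℕ))))

theorem cqCmpFun_involutive (n c : ℕ) : Function.Involutive (cqCmpFun n c) := by
  rintro ⟨a, z⟩
  simp [cqCmpFun, Bool.xor_assoc]
  by_cases h : c < (a : ℕ) <;> simp [h]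

/-- The `n`-bit classical–quantum comparator with classical constant `c`, as a
permutation of `Fin (2^n) × Bool`. -/
def cqCmp (n c : ℕ) : Equiv.Perm (Fin (2 ^ n) × Bool) := (cqCmpFun_involutive n c).toPerm _

open Equiv Finset

theorem Equiv.Perm.sign_prodCongrRight_ite {α β : Type*} [Fintype α] [DecidableEq α] [Fintype β]
    [DecidableEq β] (p : α → Prop) [DecidablePred p] (σ : Perm β) :
    Perm.sign (prodCongrRight fun a => if p a then σ else 1) = Perm.sign σ ^ #{a | p a} := by
  simp only [Perm.sign_prodCongrRight, apply_ite Perm.sign, map_one, prod_ite, prod_const_one,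
    mul_one, prod_const]

theorem Fin.card_filter_lt_val (m c : ℕ) : #{a : Fin m | c < (a : ℕ)} = m - 1 - c := by
  have h := card_filter_add_card_filter_not (s := univ) fun a : Fin m => (a : ℕ) < c + 1
  rw [Fin.card_filter_val_lt, card_univ, Fintype.card_fin] at h
  simp only [Nat.lt_succ_iff, not_le] at h
  omega

theorem cqCmp_eq_prodCongrRight (n c : ℕ) :
    cqCmp n c = prodCongrRight fun a : Fin (2 ^ n) => if c < (a : ℕ) then swap false true else 1 := by
  ext ⟨a, z⟩
  · rfl
  · by_cases h : c < (a : ℕ) <;> cases z <;> simp [cqCmp, cqCmpFun, h]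

theorem sign_cqCmp (n c : ℕ) : Perm.sign (cqCmp n c) = (-1) ^ (2 ^ n - 1 - c) := by
  rw [cqCmp_eq_prodCongrRight, Perm.sign_prodCongrRight_ite, Perm.sign_swap Bool.false_ne_true,
    Fin.card_filter_lt_val]

/-- **Parity of the classical–quantum comparator.**
For every `n ≥ 1` and every `c < 2^n`, the classical–quantum comparator permutation
`(a, z) ↦ (a, xor z (decide (c < a)))` of `Fin (2^n) × Bool` has sign `(-1)^(2^n - 1 - c)`.
In particular, for `c = 2^n - 2` it induces an odd permutation. -/
theorem cqCmp_sign (n : ℕ) (hn : 1 ≤ n) :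
    (∀ c : ℕ, c < 2 ^ n → Equiv.Perm.sign (cqCmp n c) = (-1) ^ (2 ^ n - 1 - c)) ∧
    Equiv.Perm.sign (cqCmp n (2 ^ n - 2)) = -1 := by
  refine ⟨fun c _ => sign_cqCmp n c, ?_⟩
  have h2 : 2 ≤ 2 ^ n := Nat.le_self_pow (by omega) 2
  rw [sign_cqCmp, show 2 ^ n - 1 - (2 ^ n - 2) = 1 by omega, pow_one]
end

section
/- Parity of the quantum–quantum comparator: for every n ≥ 2, the permutation of Fin (2^n) × Fin (2^n) × Bool defined by (a, b, z) ↦ (a, b, xor z (decide (a < b))) has sign +1, i.e., it is an even permutation (consistent with the existence of an ancilla-free implementation of the n-bit quantum–quantum comparator over the {CCX, CX, X} gate set). -/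
/-- The action of the `n`-bit quantum–quantum comparator: it maps `(a, b, z)` to
`(a, b, xor z (decide (a < b)))`. -/
def qqCmpFun (n : ℕ) : Fin (2 ^ n) × Fin (2 ^ n) × Bool → Fin (2 ^ n) × Fin (2 ^ n) × Bool :=
  fun p => (p.1, p.2.1, xor p.2.2 (decide (p.1 < p.2.1)))

theorem qqCmpFun_involutive (n : ℕ) : Function.Involutive (qqCmpFun n) := by
  rintro ⟨a, b, z⟩
  simp [qqCmpFun, Bool.xor_assoc]
  by_cases h : a < b <;> simp [h]

/-- The `n`-bit quantum–quantum comparator, as a permutation of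
`Fin (2^n) × Fin (2^n) × Bool`. -/
def qqCmp (n : ℕ) : Equiv.Perm (Fin (2 ^ n) × Fin (2 ^ n) × Bool) :=
  (qqCmpFun_involutive n).toPerm _

/-!
The comparator flips the target bit exactly on the `(2^n).choose 2` pairs `a < b`, so it is a
product of that many disjoint transpositions. For `n ≥ 2` this number, `2^(n-1) (2^n - 1)`,
is even.
-/

open Equiv Finset

theorem Nat.even_choose_two_of_four_dvd {m : ℕ} (h : 4 ∣ m) : Even (m.choose 2) := by
  obtain ⟨k, rfl⟩ := h
  have : 4 * k * (4 * k - 1) = 2 * (2 * (k * (4 * k - 1))) := by ring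
  rw [Nat.choose_two_right, this, Nat.mul_div_cancel_left _ two_pos]
  exact even_two_mul _

theorem qqCmp_eq_permCongr (n : ℕ) :
    qqCmp n = (prodAssoc _ _ _).permCongr
      (prodCongrRight fun x : Fin (2 ^ n) × Fin (2 ^ n) =>
        if x.1 < x.2 then swap false true else 1) := by
  ext ⟨a, b, z⟩ <;> by_cases h : a < b <;> cases z <;> simp [qqCmp, qqCmpFun, h]

/-- **Parity of the quantum–quantum comparator.**
For every `n ≥ 2`, the quantum–quantum comparator permutation
`(a, b, z) ↦ (a, b, xor z (decide (a < b)))` of `Fin (2^n) × Fin (2^n) × Bool` has sign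
`+1`, i.e. it is an even permutation (consistent with the existence of an ancilla-free
implementation over the `{CCX, CX, X}` gate set). -/
theorem qqCmp_sign (n : ℕ) (hn : 2 ≤ n) : Equiv.Perm.sign (qqCmp n) = 1 := by
  have h4 : 4 ∣ 2 ^ n := (pow_dvd_pow 2 hn : 2 ^ 2 ∣ 2 ^ n)
  rw [qqCmp_eq_permCongr, Perm.sign_permCongr, Perm.sign_prodCongrRight_ite,
    Perm.sign_swap Bool.false_ne_true, Fintype.card_product_filter_lt, Fintype.card_fin]
  exact (Nat.even_choose_two_of_four_dvd h4).neg_one_pow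
end
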